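/- arXiv:2103.06760 — 2 statements merged into one kernel-verified Lean document; each statement's English description precedes it below -/
import Mathlib

section
/- Let G be a 2K_2-free graph with a minimum-component 2-factor F having at least two cycles, and suppose all co-absorbable vertices form an independent set. If a vertex x (on cycle C of F) is of A-type, then both x⁺ and x⁻ are co-absorbable, and x itself is not co-absorbable. -/
open SimpleGraph

/-- A set of vertices is independent: no two of its members are adjacent. -/
def IsIndepSet {V : Type*} (G : SimpleGraph V) (s : Set V) : Prop :=
  ∀ x ∈ s, ∀ y ∈ s, ¬ G.Adj x y

/-- `G` contains no induced `2K₂`: there are no two disjoint edges with no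
edge of `G` between them. -/
def TwoK2Free {V : Type*} (G : SimpleGraph V) : Prop :=
  ¬ ∃ a b c d : V, G.Adj a b ∧ G.Adj c d ∧ a ≠ c ∧ a ≠ d ∧ b ≠ c ∧ b ≠ d ∧
    ¬ G.Adj a c ∧ ¬ G.Adj a d ∧ ¬ G.Adj b c ∧ ¬ G.Adj b d

/-- The independence number of `G`. -/
noncomputable def indepNum {V : Type*} [Fintype V] (G : SimpleGraph V) : ℕ :=
  sSup {n | ∃ s : Finset V, _root_.IsIndepSet G ↑s ∧ s.card = n}

/-- The number of connected components of a graph. -/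
noncomputable def compCount {W : Type*} (H : SimpleGraph W) : ℕ :=
  Nat.card H.ConnectedComponent

/-- `G` is `t`-tough: whenever removing a vertex set `S` disconnects the rest
into more than one component, `|S| ≥ t · ω(G − S)`. -/
def Tough {V : Type*} [Fintype V] (t : ℝ) (G : SimpleGraph V) : Prop :=
  ∀ S : Finset V,
    1 < compCount (G.induce ((↑S : Set V)ᶜ)) →
    t * compCount (G.induce ((↑S : Set V)ᶜ)) ≤ S.card

/-- An (oriented) `2`-factor of `G`, encoded as a permutation `σ` of the
vertices: each vertex is adjacent to its successor `σ x`, and every cycle of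
`σ` has length at least `3`.  The cycles of `σ` are exactly the cycles of the
`2`-factor, with a fixed orientation; the successor of `x` is `σ x` and its
predecessor is `σ⁻¹ x`. -/
def IsTwoFactor {V : Type*} (G : SimpleGraph V) (σ : Equiv.Perm V) : Prop :=
  ∀ x : V, G.Adj x (σ x) ∧ σ (σ x) ≠ x

/-- The number of components (cycles) of a `2`-factor encoded as a permutation. -/
noncomputable def numCycles {V : Type*} [Fintype V] (σ : Equiv.Perm V) : ℕ :=
  (@Equiv.Perm.cycleType V _ (Classical.decEq V) σ).card

/-- `σ` is a `2`-factor of `G` with the minimum number of components. -/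
def IsMinTwoFactor {V : Type*} [Fintype V] (G : SimpleGraph V) (σ : Equiv.Perm V) : Prop :=
  IsTwoFactor G σ ∧ ∀ τ : Equiv.Perm V, IsTwoFactor G τ → numCycles σ ≤ numCycles τ

/-- An (oriented) `2`-factor of `G − x`, encoded as a permutation of `V`
fixing `x`. -/
def IsTwoFactorAvoiding {V : Type*} (G : SimpleGraph V) (x : V) (σ' : Equiv.Perm V) : Prop :=
  σ' x = x ∧ ∀ y : V, y ≠ x → G.Adj y (σ' y) ∧ σ' (σ' y) ≠ y

/-- `x` is co-absorbable w.r.t. the `2`-factor `σ`: `G − x` has a `2`-factor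
with strictly fewer components than `σ`. -/
def CoAbsorbable {V : Type*} [Fintype V] (G : SimpleGraph V) (σ : Equiv.Perm V) (x : V) : Prop :=
  ∃ σ' : Equiv.Perm V, IsTwoFactorAvoiding G x σ' ∧ numCycles σ' < numCycles σ

/-- `x` is of `A`-type w.r.t. the `2`-factor `σ`: some other cycle of `σ`
contains two consecutive vertices `z`, `σ z` both adjacent to `x`. -/
def AType {V : Type*} (G : SimpleGraph V) (σ : Equiv.Perm V) (x : V) : Prop :=
  ∃ z : V, ¬ σ.SameCycle x z ∧ G.Adj x z ∧ G.Adj x (σ z)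

/-- The degree of a vertex. -/
noncomputable def vdeg {V : Type*} (G : SimpleGraph V) (x : V) : ℕ :=
  Nat.card (G.neighborSet x)

/-!
Let `z, σ z` be the two consecutive neighbours of `x` on another cycle `D`. If `σ x ~ z`,
replacing the edges `x σx`, `z σz` by `x σz`, `z σx` merges `C` and `D`, against minimality;
if `σ² x ~ z`, the same exchange that also short-cuts `σ x` merges `C - σx` and `D`, so `σ x`
is co-absorbable. Reversing `D` handles `σ x ~ σ z` and `σ² x ~ σ z`, and if none of the four
edges is present, `σ x σ²x` and `z σz` form an induced `2K₂`. Applied to the reversed factor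
`σ⁻¹` this gives `x⁻`; finally `x` is adjacent to the co-absorbable `x⁺`.
-/

namespace Equiv.Perm

variable {α : Type*} {σ τ : Perm α} {a b x y : α}

theorem SameCycle.ne_of_not_sameCycle (hxa : σ.SameCycle x a) (hyb : σ.SameCycle y b)
    (hxy : ¬σ.SameCycle x y) : a ≠ b := by
  rintro rfl
  exact hxy (hxa.trans hyb.symm)

section Orbits

variable [Finite α]

theorem SameCycle.mem_of_mapsTo {s : Set α} (hs : Set.MapsTo τ s s) (ha : a ∈ s)
    (h : τ.SameCycle a b) : b ∈ s := by
  obtain ⟨n, -, rfl⟩ := h.exists_pow_eq'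
  clear h
  induction n with
  | zero => exact ha
  | succ n ih => rw [pow_succ', mul_apply]; exact hs ih

theorem SameCycle.of_forall_sameCycle_apply (h : ∀ v, σ.SameCycle v (τ v))
    (hab : τ.SameCycle a b) : σ.SameCycle a b :=
  hab.mem_of_mapsTo (s := {v | σ.SameCycle a v}) (fun _ hv => hv.trans (h _)) .rfl

theorem SameCycle.of_apply_eq_except (hay : σ.SameCycle a y)
    (h : ∀ w, σ.SameCycle w y → w ≠ y → τ w = σ w) : τ.SameCycle a y := by
  obtain ⟨n, -, hn⟩ := hay.exists_pow_eq'
  induction n generalizing a with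
  | zero => exact hn ▸ .rfl
  | succ n ih =>
    by_cases ha : a = y
    · exact ha ▸ .rfl
    have hτa : τ.SameCycle a (σ a) := h a hay ha ▸ sameCycle_apply_right.2 .rfl
    exact hτa.trans (ih (sameCycle_apply_left.2 hay) (by rwa [pow_succ, mul_apply] at hn))

variable [DecidableEq α]

theorem sameCycle_mul_swap (hxy : ¬σ.SameCycle x y) : (σ * swap x y).SameCycle x y := by
  have hx : (σ * swap x y).SameCycle x (σ y) := ⟨1, by simp⟩
  refine hx.trans (SameCycle.of_apply_eq_except (sameCycle_apply_left.2 .rfl) fun w hw hwy => ?_)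
  have hwx : w ≠ x := by rintro rfl; exact hxy hw
  simp [swap_apply_of_ne_of_ne hwx hwy]

theorem SameCycle.mul_swap (hxy : ¬σ.SameCycle x y) (h : σ.SameCycle a b) :
    (σ * swap x y).SameCycle a b := by
  refine h.of_forall_sameCycle_apply fun w => ?_
  have hm := sameCycle_mul_swap hxy
  by_cases hwx : w = x
  · subst w
    exact hm.trans ⟨1, by simp⟩
  by_cases hwy : w = y
  · subst w
    exact hm.symm.trans ⟨1, by simp⟩
  · exact ⟨1, by simp [swap_apply_of_ne_of_ne hwx hwy]⟩

theorem sameCycle_mul_swap_iff (hxy : ¬σ.SameCycle x y) :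
    (σ * swap x y).SameCycle x a ↔ σ.SameCycle x a ∨ σ.SameCycle y a := by
  refine ⟨fun h => h.mem_of_mapsTo (s := {w | σ.SameCycle x w ∨ σ.SameCycle y w})
    (fun w hw => ?_) (Or.inl .rfl), ?_⟩
  · rw [coe_mul, Function.comp_apply, swap_apply_def]
    split_ifs <;> subst_vars <;> simp_all [sameCycle_apply_right, SameCycle.refl]
  · rintro (h | h)
    · exact h.mul_swap hxy
    · exact (sameCycle_mul_swap hxy).trans (h.mul_swap hxy)

end Orbits

variable [Fintype α] [DecidableEq α] {w z : α}

theorem cycleOf_inv_apply (σ : Perm α) (x y : α) :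
    (σ.cycleOf x)⁻¹ y = if σ.SameCycle x y then σ⁻¹ y else y := by
  simp [cycleOf_inv, cycleOf_apply, sameCycle_inv]

theorem disjoint_mul_inv_cycleOf (σ : Perm α) (x : α) :
    (σ * (σ.cycleOf x)⁻¹).Disjoint (σ.cycleOf x) := by
  intro y
  by_cases h : σ.SameCycle x y
  · left; rw [mul_apply, cycleOf_inv_apply, if_pos h]; simp
  · right; exact cycleOf_apply_of_not_sameCycle h

theorem mul_inv_cycleOf_mul_inv_cycleOf_apply (hxy : ¬σ.SameCycle x y) (v : α) :
    (σ * (σ.cycleOf x)⁻¹ * (σ.cycleOf y)⁻¹) v =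
      if σ.SameCycle x v ∨ σ.SameCycle y v then v else σ v := by
  simp only [mul_apply, cycleOf_inv_apply]
  by_cases h₁ : σ.SameCycle x v <;> by_cases h₂ : σ.SameCycle y v
  · exact absurd (h₁.trans h₂.symm) hxy
  all_goals simp [h₁, h₂, sameCycle_symm_apply_right]

theorem card_cycleType_mul_inv_cycleOf_mul_inv_cycleOf (hx : σ x ≠ x) (hy : σ y ≠ y)
    (hxy : ¬σ.SameCycle x y) :
    Multiset.card (σ * (σ.cycleOf x)⁻¹ * (σ.cycleOf y)⁻¹).cycleType + 2 =
      Multiset.card σ.cycleType := by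
  set ρ := σ * (σ.cycleOf x)⁻¹ * (σ.cycleOf y)⁻¹
  have hd₁ : ρ.Disjoint (σ.cycleOf x) := fun v => by
    by_cases h : σ.SameCycle x v
    · exact Or.inl (by simp [ρ, mul_inv_cycleOf_mul_inv_cycleOf_apply hxy, h])
    · exact Or.inr (cycleOf_apply_of_not_sameCycle h)
  have hd₂ : ρ.Disjoint (σ.cycleOf y) := fun v => by
    by_cases h : σ.SameCycle y v
    · exact Or.inl (by simp [ρ, mul_inv_cycleOf_mul_inv_cycleOf_apply hxy, h])
    · exact Or.inr (cycleOf_apply_of_not_sameCycle h)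
  have hd₁₂ : (σ.cycleOf y).Disjoint (σ.cycleOf x) := fun v => by
    by_cases h : σ.SameCycle y v
    · exact Or.inr (cycleOf_apply_of_not_sameCycle fun h' => hxy (h'.trans h.symm))
    · exact Or.inl (cycleOf_apply_of_not_sameCycle h)
  have hσ : σ = ρ * (σ.cycleOf y * σ.cycleOf x) := by simp [ρ, mul_assoc]
  conv_rhs => rw [hσ, (hd₂.mul_right hd₁).cycleType_mul, hd₁₂.cycleType_mul,
    (isCycle_cycleOf _ hx).cycleType, (isCycle_cycleOf _ hy).cycleType]
  simp only [Multiset.card_add, Multiset.card_singleton]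

theorem card_cycleType_mul_swap (hx : σ x ≠ x) (hy : σ y ≠ y) (hxy : ¬σ.SameCycle x y) :
    Multiset.card (σ * swap x y).cycleType + 1 = Multiset.card σ.cycleType := by
  set m := σ * swap x y
  set ρ := σ * (σ.cycleOf x)⁻¹ * (σ.cycleOf y)⁻¹
  have hmx : ∀ v, m.SameCycle x v ↔ σ.SameCycle x v ∨ σ.SameCycle y v :=
    fun _ => sameCycle_mul_swap_iff hxy
  have hρ : ∀ v, ρ v = if m.SameCycle x v then v else σ v := fun v => by
    simp only [ρ, hmx, mul_inv_cycleOf_mul_inv_cycleOf_apply hxy]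
  have hm : m = ρ * m.cycleOf x := by
    ext v
    by_cases h : m.SameCycle x v
    · simp [cycleOf_apply, h, hρ, sameCycle_apply_right]
    · have hvx : v ≠ x := by rintro rfl; exact h .rfl
      have hvy : v ≠ y := by rintro rfl; exact h (sameCycle_mul_swap hxy)
      simp [m, cycleOf_apply, h, hρ, swap_apply_of_ne_of_ne hvx hvy]
  have hd : ρ.Disjoint (m.cycleOf x) := fun v => by
    by_cases h : m.SameCycle x v <;> simp [cycleOf_apply, h, hρ]
  have hmx' : m x ≠ x := fun h => hxy (SameCycle.symm ⟨1, by simpa [m] using h⟩)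
  rw [← card_cycleType_mul_inv_cycleOf_mul_inv_cycleOf hx hy hxy, hm, hd.cycleType_mul,
    (isCycle_cycleOf _ hmx').cycleType]
  simp [ρ]

-- `swap x w * σ` short-cuts `x ↦ σ w` and fixes `w`; fixed points do not count in `cycleType`.
theorem card_cycleType_swap_mul (hw : σ x = w) (hwx : w ≠ x) (hσw : σ w ≠ x) :
    Multiset.card (swap x w * σ).cycleType = Multiset.card σ.cycleType := by
  have hx : σ x ≠ x := hw ▸ hwx
  have hcx : σ.cycleOf x x = w := by rw [cycleOf_apply_self, hw]
  have hcw : σ.cycleOf x (σ.cycleOf x x) ≠ x := by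
    rwa [cycleOf_apply_self, cycleOf_apply_apply_self, hw]
  have hd := disjoint_mul_inv_cycleOf σ x
  have hcut : (swap x (σ.cycleOf x x) * σ.cycleOf x).IsCycle :=
    (isCycle_cycleOf σ hx).swap_mul (hcx ▸ hwx) hcw
  have hd' : (swap x (σ.cycleOf x x) * σ.cycleOf x).Disjoint (σ * (σ.cycleOf x)⁻¹) :=
    hd.symm.mono (by rw [support_swap_mul_eq _ _ hcw]; exact Finset.sdiff_subset) le_rfl
  have hσ : σ = σ.cycleOf x * (σ * (σ.cycleOf x)⁻¹) := by rw [hd.symm.commute.eq]; group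
  have hτ : swap x w * σ = swap x (σ.cycleOf x x) * σ.cycleOf x * (σ * (σ.cycleOf x)⁻¹) := by
    rw [hcx, mul_assoc, ← hσ]
  rw [hτ, hd'.cycleType_mul, hcut.cycleType]
  conv_rhs => rw [hσ, hd.symm.cycleType_mul, (isCycle_cycleOf σ hx).cycleType]
  simp [add_comm]

-- Multiplying by `c⁻¹ ^ 2`, `c` the cycle through `z`, replaces that cycle factor by `c⁻¹`.
def reverseCycleOf (σ : Perm α) (z : α) : Perm α := σ * (σ.cycleOf z)⁻¹ ^ 2

theorem reverseCycleOf_apply (σ : Perm α) (z v : α) :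
    σ.reverseCycleOf z v = if σ.SameCycle z v then σ⁻¹ v else σ v := by
  have h' : σ.SameCycle z (σ⁻¹ v) ↔ σ.SameCycle z v := sameCycle_symm_apply_right
  simp only [reverseCycleOf, pow_two, mul_apply, cycleOf_inv_apply]
  split_ifs <;> simp_all

theorem cycleType_reverseCycleOf (σ : Perm α) (z : α) :
    (σ.reverseCycleOf z).cycleType = σ.cycleType := by
  have hd := disjoint_mul_inv_cycleOf σ z
  have hσ : σ = σ * (σ.cycleOf z)⁻¹ * σ.cycleOf z := by group
  have hr : σ.reverseCycleOf z = σ * (σ.cycleOf z)⁻¹ * (σ.cycleOf z)⁻¹ := by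
    rw [reverseCycleOf, pow_two, mul_assoc]
  rw [hr, hd.inv_right.cycleType_mul, cycleType_inv]
  conv_rhs => rw [hσ, hd.cycleType_mul]

theorem SameCycle.of_reverseCycleOf (h : (σ.reverseCycleOf z).SameCycle a b) :
    σ.SameCycle a b :=
  h.of_forall_sameCycle_apply fun v => by
    rw [reverseCycleOf_apply]
    split_ifs
    · exact ⟨-1, by simp⟩
    · exact ⟨1, by simp⟩

end Equiv.Perm

open Equiv Equiv.Perm

theorem numCycles_eq_card_cycleType {α : Type*} [Fintype α] [DecidableEq α] (σ : Perm α) :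
    numCycles σ = Multiset.card σ.cycleType := by
  unfold numCycles; congr!

namespace IsTwoFactor

variable {α : Type*} {G : SimpleGraph α} {σ : Perm α} {x y : α}

theorem apply_ne (hσ : IsTwoFactor G σ) (v : α) : σ v ≠ v :=
  fun h => (hσ v).2 (by rw [h, h])

theorem inv (hσ : IsTwoFactor G σ) : IsTwoFactor G σ⁻¹ := by
  intro v
  refine ⟨by simpa using (hσ (σ⁻¹ v)).1.symm, fun h => (hσ v).2 ?_⟩
  conv_lhs => rw [← h]
  simp

variable [DecidableEq α]

theorem mul_swap (hσ : IsTwoFactor G σ) (hxy : ¬σ.SameCycle x y) (hx : G.Adj x (σ y))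
    (hy : G.Adj y (σ x)) : IsTwoFactor G (σ * swap x y) := by
  have hne : ∀ {a b}, σ.SameCycle x a → σ.SameCycle y b → a ≠ b :=
    fun ha hb => ha.ne_of_not_sameCycle hb hxy
  have hs : ∀ {a b}, σ.SameCycle a b → σ.SameCycle a (σ b) := sameCycle_apply_right.2
  have hτ : ∀ w, w ≠ x → w ≠ y → (σ * swap x y) w = σ w := fun w h₁ h₂ => by
    simp [swap_apply_of_ne_of_ne h₁ h₂]
  intro v
  by_cases hvx : v = x
  · subst v
    rw [mul_apply, swap_apply_left, hτ _ (hne .rfl (hs .rfl)).symm (hσ.apply_ne y)]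
    exact ⟨hx, (hne .rfl (hs (hs .rfl))).symm⟩
  by_cases hvy : v = y
  · subst v
    rw [mul_apply, swap_apply_right, hτ _ (hσ.apply_ne x) (hne (hs .rfl) .rfl)]
    exact ⟨hy, hne (hs (hs .rfl)) .rfl⟩
  rw [hτ v hvx hvy]
  refine ⟨(hσ v).1, ?_⟩
  by_cases h₁ : σ v = x
  · rw [h₁, mul_apply, swap_apply_left]
    exact (hne (by rw [← sameCycle_apply_right, h₁]) (hs .rfl)).symm
  by_cases h₂ : σ v = y
  · rw [h₂, mul_apply, swap_apply_right]
    exact hne (hs .rfl) (by rw [← sameCycle_apply_right, h₂])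
  · rw [hτ _ h₁ h₂]
    exact (hσ v).2

theorem isTwoFactorAvoiding_mul_swap_mul_swap (hσ : IsTwoFactor G σ) (hxy : ¬σ.SameCycle x y)
    (hx : G.Adj x (σ y)) (hy : G.Adj y (σ (σ x))) :
    IsTwoFactorAvoiding G (σ x) (σ * swap x (σ x) * swap x y) := by
  have hne : ∀ {a b}, σ.SameCycle x a → σ.SameCycle y b → a ≠ b :=
    fun ha hb => ha.ne_of_not_sameCycle hb hxy
  have hs : ∀ {a b}, σ.SameCycle a b → σ.SameCycle a (σ b) := sameCycle_apply_right.2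
  set τ := σ * swap x (σ x) * swap x y
  have hτ : ∀ w, w ≠ x → w ≠ y → w ≠ σ x → τ w = σ w := fun w h₁ h₂ h₃ => by
    simp [τ, swap_apply_of_ne_of_ne h₁ h₂, swap_apply_of_ne_of_ne h₁ h₃]
  have hτx : τ x = σ y := by
    simp [τ, swap_apply_of_ne_of_ne (hne .rfl .rfl).symm (hne (hs .rfl) .rfl).symm]
  have hτy : τ y = σ (σ x) := by simp [τ]
  have hτu : τ (σ x) = σ x := by
    simp [τ, swap_apply_of_ne_of_ne (hσ.apply_ne x) (hne (hs .rfl) .rfl)]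
  refine ⟨hτu, fun v hvu => ?_⟩
  by_cases hvx : v = x
  · subst v
    rw [hτx, hτ _ (hne .rfl (hs .rfl)).symm (hσ.apply_ne y) (hne (hs .rfl) (hs .rfl)).symm]
    exact ⟨hx, (hne .rfl (hs (hs .rfl))).symm⟩
  by_cases hvy : v = y
  · subst v
    rw [hτy, hτ _ (hσ x).2 (hne (hs (hs .rfl)) .rfl) (fun h => hσ.apply_ne x (σ.injective h))]
    exact ⟨hy, hne (hs (hs (hs .rfl))) .rfl⟩
  rw [hτ v hvx hvy hvu]
  refine ⟨(hσ v).1, ?_⟩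
  by_cases h₁ : σ v = x
  · rw [h₁, hτx]
    exact (hne (by rw [← sameCycle_apply_right, h₁]) (hs .rfl)).symm
  by_cases h₂ : σ v = y
  · rw [h₂, hτy]
    exact hne (hs (hs .rfl)) (by rw [← sameCycle_apply_right, h₂])
  · rw [hτ _ h₁ h₂ (fun h => hvx (σ.injective h))]
    exact (hσ v).2

variable [Fintype α]

theorem reverseCycleOf (hσ : IsTwoFactor G σ) (z : α) : IsTwoFactor G (σ.reverseCycleOf z) := by
  intro v
  simp only [reverseCycleOf_apply]
  by_cases h : σ.SameCycle z v
  · have h' : σ.SameCycle z (σ⁻¹ v) := sameCycle_symm_apply_right.2 h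
    simpa [h, h'] using hσ.inv v
  · have h' : ¬σ.SameCycle z (σ v) := fun h' => h (sameCycle_apply_right.1 h')
    simpa [h, h'] using hσ v

theorem numCycles_mul_swap_lt (hσ : IsTwoFactor G σ) (hxy : ¬σ.SameCycle x y) :
    numCycles (σ * swap x y) < numCycles σ := by
  have := card_cycleType_mul_swap (hσ.apply_ne x) (hσ.apply_ne y) hxy
  rw [numCycles_eq_card_cycleType, numCycles_eq_card_cycleType]
  omega

theorem coAbsorbable_apply (hσ : IsTwoFactor G σ) (hxy : ¬σ.SameCycle x y)
    (hx : G.Adj x (σ y)) (hy : G.Adj y (σ (σ x))) : CoAbsorbable G σ (σ x) := by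
  refine ⟨_, hσ.isTwoFactorAvoiding_mul_swap_mul_swap hxy hx hy, ?_⟩
  have hne : ∀ {a b}, σ.SameCycle x a → σ.SameCycle y b → a ≠ b :=
    fun ha hb => ha.ne_of_not_sameCycle hb hxy
  have hs : ∀ {a b}, σ.SameCycle a b → σ.SameCycle a (σ b) := sameCycle_apply_right.2
  have hu : (σ * swap x y) (σ x) = σ (σ x) := by
    simp [swap_apply_of_ne_of_ne (hσ.apply_ne x) (hne (hs .rfl) .rfl)]
  have hu' : (σ * swap x y) (σ (σ x)) = σ (σ (σ x)) := by
    simp [swap_apply_of_ne_of_ne (hσ x).2 (hne (hs (hs .rfl)) .rfl)]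
  -- splice the two cycles, then short-cut `σ x`
  have hτ : σ * swap x (σ x) * swap x y = swap (σ x) (σ (σ x)) * (σ * swap x y) := by
    rw [mul_swap_eq_swap_mul σ x (σ x), mul_assoc]
  have hlt := hσ.numCycles_mul_swap_lt hxy
  simp only [numCycles_eq_card_cycleType] at hlt ⊢
  rwa [hτ, card_cycleType_swap_mul hu (fun h => hσ.apply_ne x (σ.injective h))
    (by rw [hu']; exact fun h => (hσ x).2 (σ.injective h))]

end IsTwoFactor

theorem AType.inv {α : Type*} {G : SimpleGraph α} {σ : Perm α} {x : α} (hx : AType G σ x) :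
    AType G σ⁻¹ x := by
  obtain ⟨z, hxz, h₁, h₂⟩ := hx
  exact ⟨σ z, by rwa [sameCycle_inv, sameCycle_apply_right], h₂, by simpa using h₁⟩

section MinTwoFactor

variable {α : Type*} [Fintype α] {G : SimpleGraph α} {σ τ : Perm α} {v x y : α}

theorem numCycles_inv (σ : Perm α) : numCycles σ⁻¹ = numCycles σ := by
  classical
  rw [numCycles_eq_card_cycleType, numCycles_eq_card_cycleType, cycleType_inv]

theorem CoAbsorbable.of_numCycles_eq (h : CoAbsorbable G σ v) (hστ : numCycles σ = numCycles τ) :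
    CoAbsorbable G τ v := by
  rwa [CoAbsorbable, ← hστ]

theorem IsMinTwoFactor.of_numCycles_eq (hσ : IsMinTwoFactor G σ) (hτ : IsTwoFactor G τ)
    (hστ : numCycles σ = numCycles τ) : IsMinTwoFactor G τ :=
  ⟨hτ, hστ ▸ hσ.2⟩

theorem IsMinTwoFactor.inv (hσ : IsMinTwoFactor G σ) : IsMinTwoFactor G σ⁻¹ :=
  hσ.of_numCycles_eq hσ.1.inv (numCycles_inv σ).symm

variable [DecidableEq α]

theorem numCycles_reverseCycleOf (σ : Perm α) (z : α) :
    numCycles (σ.reverseCycleOf z) = numCycles σ := by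
  rw [numCycles_eq_card_cycleType, numCycles_eq_card_cycleType, cycleType_reverseCycleOf]

theorem IsMinTwoFactor.reverseCycleOf (hσ : IsMinTwoFactor G σ) (z : α) :
    IsMinTwoFactor G (σ.reverseCycleOf z) :=
  hσ.of_numCycles_eq (hσ.1.reverseCycleOf z) (numCycles_reverseCycleOf σ z).symm

theorem IsMinTwoFactor.not_adj_apply (hσ : IsMinTwoFactor G σ) (hxy : ¬σ.SameCycle x y)
    (hx : G.Adj x (σ y)) : ¬G.Adj y (σ x) :=
  fun hy => (hσ.2 _ (hσ.1.mul_swap hxy hx hy)).not_gt (hσ.1.numCycles_mul_swap_lt hxy)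

theorem IsMinTwoFactor.coAbsorbable_apply_of_aType (h2 : TwoK2Free G) (hσ : IsMinTwoFactor G σ)
    (hx : AType G σ x) : CoAbsorbable G σ (σ x) := by
  obtain ⟨z, hxz, h₁, h₂⟩ := hx
  set σ' := σ.reverseCycleOf z
  have hσ' : IsMinTwoFactor G σ' := hσ.reverseCycleOf z
  have hzσz : σ.SameCycle z (σ z) := sameCycle_apply_right.2 .rfl
  have hxz' : ¬σ'.SameCycle x (σ z) := fun h => hxz (h.of_reverseCycleOf.trans hzσz.symm)
  have hσ'z : σ' (σ z) = z := by simp [σ', reverseCycleOf_apply, hzσz]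
  have hσ'x : ∀ {v}, σ.SameCycle x v → σ' v = σ v := fun {v} hv => by
    rw [reverseCycleOf_apply, if_neg fun h => hxz (hv.trans h.symm)]
  have hne : ∀ {a b}, σ.SameCycle x a → σ.SameCycle z b → a ≠ b :=
    fun ha hb => ha.ne_of_not_sameCycle hb hxz
  have hs : ∀ {a b}, σ.SameCycle a b → σ.SameCycle a (σ b) := sameCycle_apply_right.2
  have A₁ : ¬G.Adj (σ x) z := fun h => hσ.not_adj_apply hxz h₂ h.symm
  -- reversing the cycle through `z` turns edges at `σ z` into edges at `z`
  have A₂ : ¬G.Adj (σ x) (σ z) := fun h =>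
    hσ'.not_adj_apply hxz' (by rwa [hσ'z]) (hσ'x .rfl ▸ h.symm)
  by_cases A₃ : G.Adj (σ (σ x)) z
  · exact hσ.1.coAbsorbable_apply hxz h₂ A₃.symm
  by_cases A₄ : G.Adj (σ (σ x)) (σ z)
  · have := hσ'.1.coAbsorbable_apply hxz' (by rwa [hσ'z])
      (by rw [hσ'x .rfl, hσ'x (hs .rfl)]; exact A₄.symm)
    rw [hσ'x .rfl] at this
    exact this.of_numCycles_eq (numCycles_reverseCycleOf σ z)
  exact absurd ⟨σ x, σ (σ x), z, σ z, (hσ.1 (σ x)).1, (hσ.1 z).1, hne (hs .rfl) .rfl,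
    hne (hs .rfl) hzσz, hne (hs (hs .rfl)) .rfl, hne (hs (hs .rfl)) hzσz, A₁, A₂, A₃, A₄⟩ h2

end MinTwoFactor

theorem stmt8_general {V : Type*} [Fintype V] (G : SimpleGraph V) (h2 : TwoK2Free G)
    (σ : Equiv.Perm V) (hσ : IsMinTwoFactor G σ)
    (hind : _root_.IsIndepSet G {z : V | CoAbsorbable G σ z})
    (x : V) (hx : AType G σ x) :
    CoAbsorbable G σ (σ x) ∧ CoAbsorbable G σ (σ⁻¹ x) ∧ ¬ CoAbsorbable G σ x := by
  classical
  have hsucc := hσ.coAbsorbable_apply_of_aType h2 hx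
  have hpred : CoAbsorbable G σ (σ⁻¹ x) :=
    (hσ.inv.coAbsorbable_apply_of_aType h2 hx.inv).of_numCycles_eq (numCycles_inv σ)
  exact ⟨hsucc, hpred, fun h => hind x h (σ x) hsucc (hσ.1 x).1⟩

theorem stmt8 {V : Type*} [Fintype V] (G : SimpleGraph V) (h2 : TwoK2Free G)
    (σ : Equiv.Perm V) (hσ : IsMinTwoFactor G σ) (hcyc : 1 < numCycles σ)
    (hind : _root_.IsIndepSet G {z : V | CoAbsorbable G σ z})
    (x : V) (hx : AType G σ x) :
    CoAbsorbable G σ (σ x) ∧ CoAbsorbable G σ (σ⁻¹ x) ∧ ¬ CoAbsorbable G σ x :=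
  stmt8_general G h2 σ hσ hind x hx
end

section
/- Let G be a graph with a 2-factor F of minimum number of components, x a vertex of G, and F' a 2-factor of G − x with ω(F') < ω(F). Let N(x)⁺ be the set of successors (on the cycles of F', with fixed orientations) of neighbors of x. Then N(x)⁺ ∪ {x} is an independent set in G. -/
open SimpleGraph

/-! If `x` were adjacent to `y` and `σ' y`, or if `σ' y₁ ~ σ' y₂` for neighbours `y₁ ≠ y₂` of `x`,
then `x` and the cycles of `σ'` through these vertices could be rerouted into one cycle of `G`:
`x, σ' y, …, y, x` in the first case and `x, y₂, …, σ' y₁, σ' y₂, …, y₁, x` in the second, where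
one of the two stretches runs against the orientation of `σ'`. Replacing the cycles of `σ'` it
covers by this single cycle gives a 2-factor of `G` with at most `numCycles σ' < numCycles σ`
cycles, contradicting the minimality of `σ`. The new cycle is built as a list of vertices and
turned into a permutation by `List.formPerm`. -/

open Equiv Equiv.Perm

namespace List

variable {α : Type*} [DecidableEq α]

theorem rel_formPerm_of_isChain {R : α → α → Prop} {L : List α} (hN : L.Nodup) (hne : L ≠ [])
    (hchain : L.IsChain R) (hclose : R (L.getLast hne) (L.head hne)) :
    ∀ z ∈ L, R z (L.formPerm z) := by
  intro z hz
  obtain ⟨i, hi, rfl⟩ := getElem_of_mem hz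
  rw [formPerm_apply_getElem _ hN]
  rcases lt_or_ge (i + 1) L.length with h | h
  · simpa [Nat.mod_eq_of_lt h] using isChain_iff_getElem.mp hchain i h
  · have hi1 : i = L.length - 1 := by omega
    simp only [show i + 1 = L.length by omega, Nat.mod_self, ← head_eq_getElem_zero hne]
    simpa [hi1, getLast_eq_getElem] using hclose

end List

namespace Equiv.Perm

variable {α : Type*} [Fintype α] [DecidableEq α]

theorem IsCycle.apply_apply_ne_self {c : Perm α} (hc : c.IsCycle) (h3 : 3 ≤ c.support.card)
    {z : α} (hz : c z ≠ z) : c (c z) ≠ z := by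
  intro h
  have hsq : c ^ 2 = 1 := hc.pow_eq_one_iff.mpr ⟨z, hz, by rwa [sq, mul_apply]⟩
  have := Nat.le_of_dvd two_pos (hc.orderOf ▸ orderOf_dvd_of_pow_eq_one hsq)
  omega

section Restrict

variable {p : α → Prop} [DecidablePred p] (σ : Perm α) (hp : ∀ z, p (σ z) ↔ p z)

theorem card_cycleType_ofSubtype_add_ofSubtype_not :
    Multiset.card (ofSubtype (σ.subtypePerm hp)).cycleType +
      Multiset.card
        (ofSubtype (σ.subtypePerm (p := (¬ p ·)) fun z => not_congr (hp z))).cycleType =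
      Multiset.card σ.cycleType := by
  have hdisj : Disjoint (ofSubtype (σ.subtypePerm hp))
      (ofSubtype (σ.subtypePerm (p := (¬ p ·)) fun z => not_congr (hp z))) := by
    intro z
    by_cases hz : p z
    · exact .inr (ofSubtype_apply_of_not_mem _ (not_not.mpr hz))
    · exact .inl (ofSubtype_apply_of_not_mem _ hz)
  have hmul : ofSubtype (σ.subtypePerm hp) *
      ofSubtype (σ.subtypePerm (p := (¬ p ·)) fun z => not_congr (hp z)) = σ := by
    ext z
    by_cases hz : p z
    · rw [mul_apply, ofSubtype_apply_of_not_mem (p := (¬ p ·)) _ (not_not.mpr hz),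
        ofSubtype_apply_of_mem _ hz, subtypePerm_apply]
    · rw [mul_apply, ofSubtype_apply_of_mem (p := (¬ p ·)) _ hz, subtypePerm_apply,
        ofSubtype_apply_of_not_mem _ (mt (hp z).mp hz)]
  rw [← Multiset.card_add, ← hdisj.cycleType_mul, hmul]

theorem card_cycleType_cycle_mul_ofSubtype_not_le {c : Perm α} (hc : c.IsCycle)
    (hcp : ∀ z, c z ≠ z → p z) (hσp : ∃ z, p z ∧ σ z ≠ z) :
    Multiset.card
        (c * ofSubtype (σ.subtypePerm (p := (¬ p ·)) fun z => not_congr (hp z))).cycleType ≤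
      Multiset.card σ.cycleType := by
  have hdisj :
      Disjoint c (ofSubtype (σ.subtypePerm (p := (¬ p ·)) fun z => not_congr (hp z))) := by
    intro z
    by_cases hz : p z
    · exact .inr (ofSubtype_apply_of_not_mem _ (not_not.mpr hz))
    · exact .inl (not_not.mp (mt (hcp z) hz))
  have hpos : 0 < Multiset.card (ofSubtype (σ.subtypePerm hp)).cycleType := by
    obtain ⟨z, hz, hσz⟩ := hσp
    refine card_cycleType_pos.mpr fun h => hσz ?_
    simpa [ofSubtype_apply_of_mem _ hz] using DFunLike.congr_fun h z
  rw [← card_cycleType_ofSubtype_add_ofSubtype_not σ hp, hdisj.cycleType_mul, hc.cycleType,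
    Multiset.card_add, Multiset.card_singleton]
  omega

end Restrict

section ToList

variable {p : Perm α} {w : α}

theorem head?_toList (hw : p w ≠ w) : (p.toList w).head? = some w := by
  rw [List.head?_eq_getElem?, List.getElem?_eq_getElem (length_toList_pos_of_mem_support _ _
    (mem_support.mpr hw)), toList_getElem_zero _ _ (mem_support.mpr hw)]

theorem getLast?_toList_apply {v : α} (hv : p (p v) ≠ p v) :
    (p.toList (p v)).getLast? = some v := by
  have hlen := length_toList_pos_of_mem_support _ _ (mem_support.mpr hv)
  rw [List.getLast?_eq_getElem?, List.getElem?_eq_getElem (by omega), getElem_toList,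
    Option.some_inj]
  apply p.injective
  rw [← mul_apply, ← pow_succ', length_toList, Nat.sub_add_cancel (by simpa using hlen),
    ← pow_mod_card_support_cycleOf_self_apply, Nat.mod_self, pow_zero, one_apply]

theorem isChain_toList : (p.toList w).IsChain (fun a b => p a = b) := by
  rw [List.isChain_iff_getElem]
  intro i hi
  rw [getElem_toList, getElem_toList, pow_succ', mul_apply]

theorem apply_mem_toList_iff {z : α} : p z ∈ p.toList w ↔ z ∈ p.toList w := by
  simp [mem_toList_iff]

theorem notMem_toList_of_apply_eq_self {x : α} (hx : p x = x) : x ∉ p.toList w := fun h =>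
  (mem_toList_iff.mp h).2 |> mem_support.mp <| (mem_toList_iff.mp h).1.apply_eq_self_iff.mpr hx

theorem exists_toList_apply_eq_append_cons_apply_cons {v y : α} (hy : y ∈ p.toList (p v))
    (hyv : y ≠ v) :
    ∃ s t, p.toList (p v) = s ++ y :: p y :: t := by
  have hv : p (p v) ≠ p v := mem_support.mp (mem_toList_iff.mp hy).2
  obtain ⟨s, _ | ⟨b, t⟩, hl⟩ := List.append_of_mem hy
  · have hlast := getLast?_toList_apply hv
    simp only [hl, List.getLast?_append_cons, List.getLast?_singleton, Option.some_inj] at hlast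
    exact absurd hlast hyv
  · have hc := hl ▸ isChain_toList (p := p) (w := p v)
    obtain rfl : p y = b := (List.isChain_append_cons_cons.mp hc).2.1
    exact ⟨s, t, hl⟩

end ToList

end Equiv.Perm

section Splice

variable {V : Type*} [DecidableEq V]

theorem numCycles_eq_card_cycleType_s15 [Fintype V] (f : Perm V) :
    numCycles f = Multiset.card f.cycleType := by
  unfold numCycles
  congr!

def spliceCycle (σ : Perm V) (L : List V) (hL : ∀ z, σ z ∈ L ↔ z ∈ L) : Perm V :=
  L.formPerm * ofSubtype (σ.subtypePerm (p := (· ∉ L)) fun z => not_congr (hL z))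

variable {σ : Perm V} {L : List V} (hL : ∀ z, σ z ∈ L ↔ z ∈ L)

theorem spliceCycle_apply_of_mem {z : V} (hz : z ∈ L) :
    spliceCycle σ L hL z = L.formPerm z := by
  rw [spliceCycle, mul_apply, ofSubtype_apply_of_not_mem (p := (· ∉ L)) _ (not_not.mpr hz)]

theorem spliceCycle_apply_of_notMem {z : V} (hz : z ∉ L) : spliceCycle σ L hL z = σ z := by
  rw [spliceCycle, mul_apply, ofSubtype_apply_of_mem (p := (· ∉ L)) _ hz, subtypePerm_apply,
    List.formPerm_apply_of_notMem (mt (hL z).mp hz)]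

theorem numCycles_spliceCycle_le [Fintype V] (hN : L.Nodup) (h2 : 2 ≤ L.length)
    (hmoved : ∃ z ∈ L, σ z ≠ z) :
    numCycles (spliceCycle σ L hL) ≤ numCycles σ := by
  rw [numCycles_eq_card_cycleType_s15, numCycles_eq_card_cycleType_s15]
  refine card_cycleType_cycle_mul_ofSubtype_not_le σ hL (List.isCycle_formPerm hN h2)
    (fun z hz => ?_) (by simpa using hmoved)
  by_contra hzL
  exact hz (List.formPerm_apply_of_notMem hzL)

end Splice

namespace IsTwoFactorAvoiding

variable {V : Type*} {G : SimpleGraph V} {x : V} {σ' : Perm V}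

theorem apply_ne_self (h' : IsTwoFactorAvoiding G x σ') {y : V} (hy : y ≠ x) : σ' y ≠ y :=
  fun h => (h'.2 y hy).2 (by rw [h, h])

theorem apply_eq_iff (h' : IsTwoFactorAvoiding G x σ') {y : V} : σ' y = x ↔ y = x := by
  conv_lhs => rw [← h'.1]
  exact σ'.injective.eq_iff

theorem isChain_toList [Fintype V] [DecidableEq V] (h' : IsTwoFactorAvoiding G x σ') (w : V) :
    (σ'.toList w).IsChain G.Adj :=
  Perm.isChain_toList.imp_of_mem_imp fun a _ ha _ hab => by
    rw [← hab]
    exact (h'.2 a fun hax => notMem_toList_of_apply_eq_self h'.1 (hax ▸ ha)).1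

variable [Fintype V] [DecidableEq V] {L : List V}

theorem isTwoFactor_spliceCycle (h' : IsTwoFactorAvoiding G x σ') (hL : ∀ z, σ' z ∈ L ↔ z ∈ L)
    (hN : L.Nodup) (h3 : 3 ≤ L.length) (hx : x ∈ L) (hadj : ∀ z ∈ L, G.Adj z (L.formPerm z)) :
    IsTwoFactor G (spliceCycle σ' L hL) := by
  intro z
  by_cases hz : z ∈ L
  · rw [spliceCycle_apply_of_mem hL hz,
      spliceCycle_apply_of_mem hL (L.formPerm_apply_mem_of_mem hz)]
    refine ⟨hadj z hz, (List.isCycle_formPerm hN (by omega)).apply_apply_ne_self ?_ ?_⟩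
    · rw [List.support_formPerm_of_nodup _ hN (fun y h => by simp [h] at h3),
        List.toFinset_card_of_nodup hN]
      exact h3
    · exact (List.formPerm_apply_mem_ne_self_iff _ hN _ hz).mpr (by omega)
  · rw [spliceCycle_apply_of_notMem hL hz, spliceCycle_apply_of_notMem hL (mt (hL z).mp hz)]
    exact h'.2 z (fun h => hz (h ▸ hx))

end IsTwoFactorAvoiding

namespace IsMinTwoFactor

variable {V : Type*} [Fintype V] [DecidableEq V] {G : SimpleGraph V} {σ σ' : Perm V} {x : V}

theorem false_of_cycle_through (hσ : IsMinTwoFactor G σ) (h' : IsTwoFactorAvoiding G x σ')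
    (hlt : numCycles σ' < numCycles σ) {L : List V} (hL : ∀ z, σ' z ∈ L ↔ z ∈ L)
    (hN : L.Nodup) (h3 : 3 ≤ L.length) (hx : x ∈ L) (hadj : ∀ z ∈ L, G.Adj z (L.formPerm z)) :
    False := by
  obtain ⟨z, hzL, hzx⟩ : ∃ z ∈ L.toFinset, z ≠ x :=
    L.toFinset.exists_mem_ne (by rw [List.toFinset_card_of_nodup hN]; omega) x
  have := hσ.2 _ (h'.isTwoFactor_spliceCycle hL hN h3 hx hadj)
  have := numCycles_spliceCycle_le hL hN (by omega)
    ⟨z, List.mem_toFinset.mp hzL, h'.apply_ne_self hzx⟩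
  omega

theorem false_of_isChain (hσ : IsMinTwoFactor G σ) (h' : IsTwoFactorAvoiding G x σ')
    (hlt : numCycles σ' < numCycles σ) {M : List V} (hN : M.Nodup) (hxM : x ∉ M)
    (hM : ∀ z, σ' z ∈ M ↔ z ∈ M) (hchain : M.IsChain G.Adj) {a b : V}
    (ha : M.head? = some a) (hb : M.getLast? = some b) (hxa : G.Adj x a) (hbx : G.Adj b x) :
    False := by
  have hne : M ≠ [] := by rintro rfl; simp at ha
  have h3 : 3 ≤ (x :: M).length := by
    rcases M with _ | ⟨m, _ | ⟨_, _⟩⟩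
    · exact absurd rfl hne
    · exact (h'.apply_ne_self (Ne.symm (by simpa using hxM)) (by simpa using hM m)).elim
    · simp
  refine hσ.false_of_cycle_through h' hlt (L := x :: M) (fun z => by simp [h'.apply_eq_iff, hM])
    (List.nodup_cons.mpr ⟨hxM, hN⟩) h3 List.mem_cons_self
    (List.rel_formPerm_of_isChain (List.nodup_cons.mpr ⟨hxM, hN⟩) (List.cons_ne_nil _ _)
      (hchain.cons_of_ne_nil hne ?_) ?_)
  · rw [List.head?_eq_some_head hne, Option.some_inj] at ha
    rwa [ha]
  · rw [List.getLast?_eq_some_getLast hne, Option.some_inj] at hb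
    rwa [List.getLast_cons hne, hb]

theorem false_of_isChain_reverse_append (hσ : IsMinTwoFactor G σ)
    (h' : IsTwoFactorAvoiding G x σ') (hlt : numCycles σ' < numCycles σ) {P Q : List V}
    (hN : (P ++ Q).Nodup) (hx : x ∉ P ++ Q) (hinv : ∀ z, σ' z ∈ P ++ Q ↔ z ∈ P ++ Q)
    (hP : P.IsChain G.Adj) (hQ : Q.IsChain G.Adj) {p₀ p₁ q₀ q₁ : V}
    (hp₀ : P.head? = some p₀) (hp₁ : P.getLast? = some p₁) (hq₀ : Q.head? = some q₀)
    (hq₁ : Q.getLast? = some q₁) (hjoin : G.Adj p₀ q₀) (hxp : G.Adj x p₁) (hqx : G.Adj q₁ x) :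
    False := by
  have hperm : (P.reverse ++ Q).Perm (P ++ Q) := P.reverse_perm.append_right Q
  refine hσ.false_of_isChain h' hlt (M := P.reverse ++ Q) (hperm.nodup_iff.mpr hN)
    (mt hperm.mem_iff.mp hx) (fun z => by rw [hperm.mem_iff, hperm.mem_iff, hinv])
    ?_ ?_ ?_ hxp hqx
  · exact (List.isChain_reverse.mpr (hP.imp fun _ _ h => h.symm)).append hQ
      (by simp [hp₀, hq₀, hjoin])
  · simp [hp₁]
  · simp [hq₁]

theorem not_adj_apply_of_adj (hσ : IsMinTwoFactor G σ) (h' : IsTwoFactorAvoiding G x σ')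
    (hlt : numCycles σ' < numCycles σ) {y : V} (hy : G.Adj x y) : ¬ G.Adj x (σ' y) := by
  intro hxy
  have hw : σ' (σ' y) ≠ σ' y := h'.apply_ne_self (mt h'.apply_eq_iff.mp hy.ne')
  refine hσ.false_of_isChain h' hlt (nodup_toList _ _) (notMem_toList_of_apply_eq_self h'.1)
    (fun _ => apply_mem_toList_iff) (h'.isChain_toList _) (head?_toList hw)
    (getLast?_toList_apply hw) hxy hy.symm

theorem not_adj_apply_apply_of_sameCycle (hσ : IsMinTwoFactor G σ)
    (h' : IsTwoFactorAvoiding G x σ') (hlt : numCycles σ' < numCycles σ) {y₁ y₂ : V}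
    (h₁ : G.Adj x y₁) (h₂ : G.Adj x y₂) (hsc : σ'.SameCycle (σ' y₂) y₁) :
    ¬ G.Adj (σ' y₁) (σ' y₂) := by
  intro hE
  have hw : σ' (σ' y₂) ≠ σ' y₂ := h'.apply_ne_self (mt h'.apply_eq_iff.mp h₂.ne')
  obtain ⟨B, A, hl⟩ := exists_toList_apply_eq_append_cons_apply_cons
    (mem_toList_iff.mpr ⟨hsc, mem_support.mpr hw⟩) (mt (congrArg σ') hE.ne)
  replace hl : σ'.toList (σ' y₂) = (B ++ [y₁]) ++ (σ' y₁ :: A) := by simpa using hl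
  have hperm : ((σ' y₁ :: A) ++ (B ++ [y₁])).Perm (σ'.toList (σ' y₂)) :=
    hl ▸ List.perm_append_comm
  have hchain := h'.isChain_toList (σ' y₂)
  have hhead := head?_toList hw
  have hlast := getLast?_toList_apply hw
  rw [hl] at hchain hhead hlast
  rw [List.getLast?_append_cons] at hlast
  rw [List.head?_append_of_ne_nil _ (by simp)] at hhead
  -- the new cycle is `x, y₂, …, σ' y₁` (backwards along `σ'`), then `σ' y₂, …, y₁, x`
  refine hσ.false_of_isChain_reverse_append h' hlt (hperm.nodup_iff.mpr (nodup_toList _ _))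
    (mt hperm.mem_iff.mp (notMem_toList_of_apply_eq_self h'.1))
    (fun z => by rw [hperm.mem_iff, hperm.mem_iff, apply_mem_toList_iff])
    (List.isChain_append.mp hchain).2.1 (List.isChain_append.mp hchain).1 rfl hlast hhead
    (by simp) hE h₂ h₁.symm

theorem not_adj_apply_apply_of_not_sameCycle (hσ : IsMinTwoFactor G σ)
    (h' : IsTwoFactorAvoiding G x σ') (hlt : numCycles σ' < numCycles σ) {y₁ y₂ : V}
    (h₁ : G.Adj x y₁) (h₂ : G.Adj x y₂) (hsc : ¬ σ'.SameCycle (σ' y₂) y₁) :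
    ¬ G.Adj (σ' y₁) (σ' y₂) := by
  intro hE
  have hw₁ : σ' (σ' y₁) ≠ σ' y₁ := h'.apply_ne_self (mt h'.apply_eq_iff.mp h₁.ne')
  have hw₂ : σ' (σ' y₂) ≠ σ' y₂ := h'.apply_ne_self (mt h'.apply_eq_iff.mp h₂.ne')
  have hdisj : ∀ a ∈ σ'.toList (σ' y₁), ∀ b ∈ σ'.toList (σ' y₂), a ≠ b := by
    rintro a ha _ hb rfl
    exact hsc (sameCycle_apply_right.mp
      ((mem_toList_iff.mp hb).1.trans (mem_toList_iff.mp ha).1.symm))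
  -- the new cycle is `x, y₁, …, σ' y₁` (backwards along `σ'`), then `σ' y₂, …, y₂, x`
  refine hσ.false_of_isChain_reverse_append h' hlt
    (List.nodup_append.mpr ⟨nodup_toList _ _, nodup_toList _ _, hdisj⟩) ?_
    (fun z => by simp only [List.mem_append, apply_mem_toList_iff]) (h'.isChain_toList _)
    (h'.isChain_toList _) (head?_toList hw₁) (getLast?_toList_apply hw₁) (head?_toList hw₂)
    (getLast?_toList_apply hw₂) hE h₁ h₂.symm
  simp [notMem_toList_of_apply_eq_self h'.1]

theorem not_adj_apply_apply_of_adj (hσ : IsMinTwoFactor G σ) (h' : IsTwoFactorAvoiding G x σ')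
    (hlt : numCycles σ' < numCycles σ) {y₁ y₂ : V} (h₁ : G.Adj x y₁) (h₂ : G.Adj x y₂) :
    ¬ G.Adj (σ' y₁) (σ' y₂) := by
  by_cases hsc : σ'.SameCycle (σ' y₂) y₁
  · exact hσ.not_adj_apply_apply_of_sameCycle h' hlt h₁ h₂ hsc
  · exact hσ.not_adj_apply_apply_of_not_sameCycle h' hlt h₁ h₂ hsc

end IsMinTwoFactor

theorem stmt15 {V : Type*} [Fintype V] (G : SimpleGraph V) (σ : Equiv.Perm V)
    (hσ : IsMinTwoFactor G σ) (x : V) (σ' : Equiv.Perm V)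
    (h' : IsTwoFactorAvoiding G x σ') (hlt : numCycles σ' < numCycles σ) :
    _root_.IsIndepSet G ({x} ∪ (fun y => σ' y) '' (G.neighborSet x)) := by
  classical
  rintro u hu v hv huv
  simp only [Set.mem_union, Set.mem_singleton_iff, Set.mem_image, mem_neighborSet] at hu hv
  rcases hu with rfl | ⟨y₁, hy₁, rfl⟩ <;> rcases hv with rfl | ⟨y₂, hy₂, rfl⟩
  · exact G.irrefl huv
  · exact hσ.not_adj_apply_of_adj h' hlt hy₂ huv
  · exact hσ.not_adj_apply_of_adj h' hlt hy₁ huv.symm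
  · exact hσ.not_adj_apply_apply_of_adj h' hlt hy₁ hy₂ huv
end
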